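/- arXiv:1507.05818 — 2 statements merged into one kernel-verified Lean document; each statement's English description precedes it below -/
import Mathlib

section
/- Let H ⊆ ℝ be a rank one subgroup, i.e., a nontrivial subgroup such that any two nonzero elements have a rational ratio (equivalently, H is an increasing union of cyclic subgroups h_kℤ). Let F_H : C → Sets be the functor on the scaling-site category C defined by F_H(Ω) = Ω ∩ H_{>0} on objects (with F_H(∅) = ∅), and sending the morphism n : Ω → Ω' to the map λ ↦ nλ. Then F_H is a flat continuous functor: its category of elements ∫_C F_H is cofiltered (it is nonempty; any two objects admit an object mapping to both; and any two parallel morphisms between objects of C equalized on an element are equal), and F_H sends each cover of an interval by open subintervals to a jointly surjective family. -/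
open CategoryTheory

/-- An object of the scaling-site category `C`: a (possibly empty) bounded open interval
`Ω ⊆ [0,∞)`. -/
structure ScObj : Type where
  s : Set ℝ
  isInterval : ∃ a b : ℝ, s = Set.Ioo a b
  nonneg : s ⊆ Set.Ici 0

/-- The scaling-site category: a morphism `Ω → Ω'` is (the action on `Ω` of) a positive
integer `n` with `nΩ ⊆ Ω'`; for `Ω = ∅` all integers give the same (empty) map, so the empty
interval is an initial object. -/
instance : Category ScObj where
  Hom Ω Ω' := {φ : Ω.s → Ω'.s // ∃ n : ℕ+, ∀ x : Ω.s, (φ x : ℝ) = (n : ℝ) * (x : ℝ)}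
  id Ω := ⟨fun x => x, 1, fun x => by simp⟩
  comp {Ω₁ Ω₂ Ω₃} f g := ⟨fun x => g.1 (f.1 x), by
    obtain ⟨n, hn⟩ := f.2
    obtain ⟨m, hm⟩ := g.2
    exact ⟨m * n, fun x => by rw [hm, hn]; push_cast; ring⟩⟩
  id_comp f := rfl
  comp_id f := rfl
  assoc f g h := rfl

/-- A rank one subgroup of `ℝ`: a nontrivial subgroup in which any two elements (the second
nonzero) have rational ratio. -/
def RankOne (H : AddSubgroup ℝ) : Prop :=
  H ≠ ⊥ ∧ ∀ a ∈ H, ∀ b ∈ H, b ≠ 0 → ∃ q : ℚ, a = (q : ℝ) * b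

/-- The flat continuous functor `F_H : C → Sets`, `F_H(Ω) = Ω ∩ H_{>0}`, a morphism `n`
acting by `λ ↦ nλ`. -/
noncomputable def FH (H : AddSubgroup ℝ) : ScObj ⥤ Type where
  obj Ω := {x : ℝ // x ∈ Ω.s ∧ x ∈ H ∧ 0 < x}
  map {Ω Ω'} φ := TypeCat.ofHom fun x =>
    ⟨(φ.1 ⟨x.1, x.2.1⟩ : ℝ), (φ.1 ⟨x.1, x.2.1⟩).2, by
      obtain ⟨n, hn⟩ := φ.2
      rw [hn ⟨x.1, x.2.1⟩]
      constructor
      · have : ((n : ℕ) : ℝ) * x.1 = (n : ℕ) • x.1 := (nsmul_eq_mul _ _).symm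
        rw [show ((n : ℕ+) : ℝ) = ((n : ℕ) : ℝ) from rfl, this]
        exact AddSubgroup.nsmul_mem H x.2.2.1 _
      · have hn0 : (0 : ℝ) < (n : ℝ) := by exact_mod_cast n.pos
        exact mul_pos hn0 x.2.2.2⟩
  map_id _ := rfl
  map_comp _ _ := rfl

abbrev FHo (H : AddSubgroup ℝ) (Ω : ScObj) : Type := {x : ℝ // x ∈ Ω.s ∧ x ∈ H ∧ 0 < x}

/-- Common divisor lemma: in a rank one subgroup, any two positive elements have a common
"divisor" in the subgroup. -/
lemma rankOne_common_div (H : AddSubgroup ℝ) (hH : RankOne H)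
    (x₁ x₂ : ℝ) (h₁ : x₁ ∈ H) (h₂ : x₂ ∈ H) (p₁ : 0 < x₁) (p₂ : 0 < x₂) :
    ∃ (lam : ℝ) (a b : ℕ), lam ∈ H ∧ 0 < lam ∧ 0 < a ∧ 0 < b ∧
      (a : ℝ) * lam = x₁ ∧ (b : ℝ) * lam = x₂ := by
  obtain ⟨q, hq⟩ := hH.2 x₁ h₁ x₂ h₂ (ne_of_gt p₂)
  have hqpos : 0 < q := by
    have : (0 : ℝ) < (q : ℝ) := by
      by_contra h
      push_neg at h
      nlinarith
    exact_mod_cast this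
  have hnum : 0 < q.num := Rat.num_pos.mpr hqpos
  set a : ℕ := q.num.toNat with ha
  set b : ℕ := q.den with hb
  have haZ : (a : ℤ) = q.num := Int.toNat_of_nonneg hnum.le
  have haR : (a : ℝ) = (q.num : ℝ) := by exact_mod_cast haZ
  have hbR : (b : ℝ) = (q.den : ℝ) := rfl
  -- key relation: b * x₁ = a * x₂
  have hkey : (b : ℝ) * x₁ = (a : ℝ) * x₂ := by
    have hq' : (q : ℝ) = (q.num : ℝ) / (q.den : ℝ) := by rw [Rat.cast_def]
    have hden : (0 : ℝ) < (q.den : ℝ) := by exact_mod_cast q.pos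
    rw [haR, hbR, hq, hq']
    field_simp
  -- Bezout
  have hcop : Int.gcd q.num (q.den : ℤ) = 1 := q.reduced
  set u : ℤ := Int.gcdA q.num (q.den : ℤ) with hu
  set v : ℤ := Int.gcdB q.num (q.den : ℤ) with hv
  have hbez : (1 : ℤ) = q.num * u + (q.den : ℤ) * v := by
    have := Int.gcd_eq_gcd_ab q.num (q.den : ℤ)
    rw [hcop] at this
    exact_mod_cast this
  have hbezR : (1 : ℝ) = (a : ℝ) * (u : ℝ) + (b : ℝ) * (v : ℝ) := by
    rw [haR, hbR]
    exact_mod_cast hbez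
  set lam : ℝ := (u : ℝ) * x₁ + (v : ℝ) * x₂ with hlam
  have hlamH : lam ∈ H := by
    have h1 : (u : ℝ) * x₁ = u • x₁ := by simp
    have h2 : (v : ℝ) * x₂ = v • x₂ := by simp
    rw [hlam, h1, h2]
    exact H.add_mem (H.zsmul_mem h₁ u) (H.zsmul_mem h₂ v)
  have halam : (a : ℝ) * lam = x₁ := by
    rw [hlam]; linear_combination (-(v : ℝ)) * hkey - x₁ * hbezR
  have hblam : (b : ℝ) * lam = x₂ := by
    rw [hlam]; linear_combination (u : ℝ) * hkey - x₂ * hbezR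
  have hapos : 0 < a := by omega
  have hbpos : 0 < b := q.pos
  have hlampos : 0 < lam := by
    have haRpos : (0 : ℝ) < (a : ℝ) := by exact_mod_cast hapos
    nlinarith
  exact ⟨lam, a, b, hlamH, hlampos, hapos, hbpos, halam, hblam⟩

/-- STATEMENT 14: for a rank one subgroup `H ⊆ ℝ`, the functor `F_H` is flat (its category
of elements is cofiltered) and continuous (it sends each open cover of an interval by
subintervals, via inclusion morphisms, to a jointly surjective family). -/
theorem statement14 (H : AddSubgroup ℝ) (hH : RankOne H) :
    IsCofiltered (FH H).Elements ∧
    ∀ (Ω : ScObj) (ι : Type) (U : ι → ScObj) (inc : ∀ i, U i ⟶ Ω),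
      (∀ i, ∀ x : (U i).s, ((inc i).1 x : ℝ) = (x : ℝ)) →
      (⋃ i, (U i).s) = Ω.s →
      ∀ y : (FH H).obj Ω, ∃ (i : ι) (x : (FH H).obj (U i)), (FH H).map (inc i) x = y := by
  constructor
  · -- cofiltered
    have hne : Nonempty (FH H).Elements := by
      obtain ⟨h, hne⟩ := (AddSubgroup.ne_bot_iff_exists_ne_zero).mp hH.1
      -- get a positive element
      obtain ⟨t, htH, htpos⟩ : ∃ t : ℝ, t ∈ H ∧ 0 < t := by
        rcases lt_trichotomy (h : ℝ) 0 with hlt | heq | hgt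
        · exact ⟨-(h : ℝ), H.neg_mem h.2, by linarith⟩
        · exact absurd (Subtype.ext heq) hne
        · exact ⟨h, h.2, hgt⟩
      refine ⟨⟨⟨Set.Ioo (t/2) (t+1), ⟨_, _, rfl⟩, fun x hx => ?_⟩,
        (⟨t, Set.mem_Ioo.mpr ⟨by linarith, by linarith⟩, htH, htpos⟩ : FHo H _)⟩⟩
      have := hx.1
      simp only [Set.mem_Ici]
      linarith
    refine { nonempty := hne, cone_objs := ?_, cone_maps := ?_ }
    · rintro ⟨Ω₁, x₁⟩ ⟨Ω₂, x₂⟩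
      change FHo H Ω₁ at x₁
      change FHo H Ω₂ at x₂
      obtain ⟨lam, a, b, hlamH, hlampos, hapos, hbpos, halam, hblam⟩ :=
        rankOne_common_div H hH x₁.1 x₂.1 x₁.2.2.1 x₂.2.2.1 x₁.2.2.2 x₂.2.2.2
      obtain ⟨c₁, d₁, hΩ₁⟩ := Ω₁.isInterval
      obtain ⟨c₂, d₂, hΩ₂⟩ := Ω₂.isInterval
      have hx₁ : x₁.1 ∈ Set.Ioo c₁ d₁ := hΩ₁ ▸ x₁.2.1
      have hx₂ : x₂.1 ∈ Set.Ioo c₂ d₂ := hΩ₂ ▸ x₂.2.1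
      have haR : (0 : ℝ) < (a : ℝ) := by exact_mod_cast hapos
      have hbR : (0 : ℝ) < (b : ℝ) := by exact_mod_cast hbpos
      set L : ℝ := max (max (c₁ / a) (c₂ / b)) (lam / 2) with hL
      set R : ℝ := min (d₁ / a) (d₂ / b) with hR
      have hmemW : lam ∈ Set.Ioo L R := by
        constructor
        · apply max_lt (max_lt ?_ ?_) (by linarith)
          · rw [div_lt_iff₀ haR]; nlinarith [hx₁.1]
          · rw [div_lt_iff₀ hbR]; nlinarith [hx₂.1]
        · apply lt_min
          · rw [lt_div_iff₀ haR]; nlinarith [hx₁.2]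
          · rw [lt_div_iff₀ hbR]; nlinarith [hx₂.2]
      have hWpos : ∀ x ∈ Set.Ioo L R, 0 < x := by
        intro x hx
        have : lam / 2 ≤ L := le_max_right _ _
        have := hx.1
        linarith
      set W : ScObj := ⟨Set.Ioo L R, ⟨L, R, rfl⟩, fun x hx => le_of_lt (hWpos x hx)⟩ with hW
      have hmap₁ : ∀ x : W.s, (a : ℝ) * x.1 ∈ Ω₁.s := by
        rintro ⟨x, hx⟩
        rw [hΩ₁]
        have h1 : c₁ / a < x := lt_of_le_of_lt (le_trans (le_max_left _ _) (le_max_left _ _)) hx.1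
        have h2 : x < d₁ / a := lt_of_lt_of_le hx.2 (min_le_left _ _)
        rw [div_lt_iff₀ haR] at h1
        rw [lt_div_iff₀ haR] at h2
        constructor <;> nlinarith
      have hmap₂ : ∀ x : W.s, (b : ℝ) * x.1 ∈ Ω₂.s := by
        rintro ⟨x, hx⟩
        rw [hΩ₂]
        have h1 : c₂ / b < x := lt_of_le_of_lt (le_trans (le_max_right _ _) (le_max_left _ _)) hx.1
        have h2 : x < d₂ / b := lt_of_lt_of_le hx.2 (min_le_right _ _)
        rw [div_lt_iff₀ hbR] at h1
        rw [lt_div_iff₀ hbR] at h2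
        constructor <;> nlinarith
      set f₁ : W ⟶ Ω₁ := ⟨fun x => ⟨(a : ℝ) * x.1, hmap₁ x⟩, ⟨⟨a, hapos⟩, fun x => rfl⟩⟩ with hf₁
      set f₂ : W ⟶ Ω₂ := ⟨fun x => ⟨(b : ℝ) * x.1, hmap₂ x⟩, ⟨⟨b, hbpos⟩, fun x => rfl⟩⟩ with hf₂
      set w : FHo H W := ⟨lam, hmemW, hlamH, hlampos⟩ with hw
      refine ⟨⟨W, w⟩, ⟨f₁, ?_⟩, ⟨f₂, ?_⟩, trivial⟩
      · exact Subtype.ext halam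
      · exact Subtype.ext hblam
    · rintro ⟨Ω₁, x₁⟩ ⟨Ω₂, x₂⟩ f g
      change FHo H Ω₁ at x₁
      have : f = g := by
        obtain ⟨n, hn⟩ := f.1.2
        obtain ⟨m, hm⟩ := g.1.2
        have hval : Subtype.val ((FH H).map f.1 x₁) = Subtype.val ((FH H).map g.1 x₁) := by
          rw [f.2, g.2]
        have hvn : (n : ℝ) * x₁.1 = (m : ℝ) * x₁.1 := by
          have h1 : Subtype.val ((FH H).map f.1 x₁) = (n : ℝ) * x₁.1 := hn ⟨x₁.1, x₁.2.1⟩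
          have h2 : Subtype.val ((FH H).map g.1 x₁) = (m : ℝ) * x₁.1 := hm ⟨x₁.1, x₁.2.1⟩
          rw [← h1, ← h2, hval]
        have hnm : (n : ℝ) = (m : ℝ) :=
          mul_right_cancel₀ (ne_of_gt x₁.2.2.2) hvn
        apply Subtype.ext
        apply Subtype.ext
        funext x
        apply Subtype.ext
        rw [hn x, hm x, hnm]
      exact ⟨⟨Ω₁, x₁⟩, 𝟙 _, by rw [this]⟩
  · -- continuity
    intro Ω ι U inc hinc hcover y
    change FHo H Ω at y
    have hy : y.1 ∈ ⋃ i, (U i).s := by rw [hcover]; exact y.2.1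
    obtain ⟨i, hyi⟩ := Set.mem_iUnion.mp hy
    refine ⟨i, (⟨y.1, hyi, y.2.2.1, y.2.2.2⟩ : FHo H (U i)), Subtype.ext ?_⟩
    exact hinc i ⟨y.1, hyi⟩
end

section
/- Let F : C → Sets be a flat continuous functor on the scaling-site category C: its category of elements is cofiltered (nonempty; any two objects admit a common ancestor; parallel morphisms of C equalized on an element coincide), and F sends each cover of an interval by open subintervals to a jointly surjective family. For λ ∈ (0,∞) let F_λ = lim_{λ ∈ J} F(J), the inverse limit of F(J) over open intervals J containing λ (the co-stalk at λ). Then: (i) for each λ ∈ (0,∞) the set F_λ has at most one element; and (ii) for every bounded open interval V ⊆ (0,∞), the canonical maps identify F(V) with the disjoint union ⨆_{λ ∈ V} F_λ. -/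
open CategoryTheory

/-- Continuity of a functor `F : C → Sets` on the scaling site: every cover of an interval
by open subintervals (via inclusion morphisms, i.e. those given by the integer `1`) is sent
to a jointly surjective family. -/
def ScContinuous (F : ScObj ⥤ Type) : Prop :=
  ∀ (Ω : ScObj) (ι : Type) (U : ι → ScObj) (inc : ∀ i, U i ⟶ Ω),
    (∀ i, ∀ x : (U i).s, ((inc i).1 x : ℝ) = (x : ℝ)) →
    (⋃ i, (U i).s) = Ω.s →
    ∀ y : F.obj Ω, ∃ (i : ι) (x : F.obj (U i)), F.map (inc i) x = y

/-- The co-stalk `F_λ = lim_{λ ∈ J} F(J)` of `F` at `λ`: compatible families of elements of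
`F(J)` over the open intervals `J` containing `λ`, with transition maps the inclusions. -/
def CoStalk (F : ScObj ⥤ Type) (lam : ℝ) : Type :=
  {s : ∀ J : {J : ScObj // lam ∈ J.s}, F.obj J.1 //
    ∀ (J J' : {J : ScObj // lam ∈ J.s}) (f : J.1 ⟶ J'.1),
      (∀ x : J.1.s, (f.1 x : ℝ) = (x : ℝ)) → F.map f (s J) = s J'}

/- ### Auxiliary definitions and lemmas -/

lemma ScObj.ext' {Ω Ω' : ScObj} (h : Ω.s = Ω'.s) : Ω = Ω' := by
  cases Ω; cases Ω'; simp_all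

/-- Make an interval object. -/
def mkObj (c d : ℝ) (h : 0 ≤ c) : ScObj :=
  ⟨Set.Ioo c d, ⟨c, d, rfl⟩, fun _ hx => le_trans h (le_of_lt hx.1)⟩

lemma mkObj_s (c d : ℝ) (h : 0 ≤ c) : (mkObj c d h).s = Set.Ioo c d := rfl

/-- Morphisms of the scaling site are determined by their action on real numbers. -/
lemma scHomExt {Ω Ω' : ScObj} (f g : Ω ⟶ Ω')
    (h : ∀ x : Ω.s, (f.1 x : ℝ) = (g.1 x : ℝ)) : f = g :=
  Subtype.ext (funext fun x => Subtype.ext (h x))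

/-- The inclusion morphism of a subinterval. -/
def inclHom (J W : ScObj) (h : J.s ⊆ W.s) : J ⟶ W :=
  ⟨fun x => ⟨x.1, h x.2⟩, 1, fun x => by simp⟩

@[simp] lemma inclHom_val (J W : ScObj) (h : J.s ⊆ W.s) (x : J.s) :
    ((inclHom J W h).1 x : ℝ) = (x : ℝ) := rfl

lemma scLowerBound (Ω : ScObj) {a b : ℝ} (hs : Ω.s = Set.Ioo a b)
    (hne : Ω.s.Nonempty) : 0 ≤ a := by
  by_contra hneg
  push_neg at hneg
  obtain ⟨t, ht⟩ := hne
  rw [hs] at ht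
  have hab : a < b := lt_trans ht.1 ht.2
  have hm1 : a < min b 0 := lt_min hab hneg
  set z := (a + min b 0) / 2 with hz
  have hz1 : a < z := by rw [hz]; linarith
  have hz2 : z < min b 0 := by rw [hz]; linarith
  have hzb : z < b := lt_of_lt_of_le hz2 (min_le_left _ _)
  have hz0 : z < 0 := lt_of_lt_of_le hz2 (min_le_right _ _)
  have := Ω.nonneg (by rw [hs]; exact ⟨hz1, hzb⟩)
  simp only [Set.mem_Ici] at this
  linarith

lemma scMemPos (Ω : ScObj) {t : ℝ} (ht : t ∈ Ω.s) : 0 < t := by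
  obtain ⟨a, b, hs⟩ := Ω.isInterval
  have h0 := scLowerBound Ω hs ⟨t, ht⟩
  rw [hs] at ht
  exact lt_of_le_of_lt h0 ht.1

/-- STATEMENT 16: for a flat continuous functor `F` on the scaling site, each co-stalk `F_λ`
(`λ > 0`) has at most one element, and for every bounded open interval `V ⊆ (0,∞)` the
canonical maps identify `F(V)` with the disjoint union `⨆_{λ ∈ V} F_λ`. -/
theorem statement16 (F : ScObj ⥤ Type) (hflat : IsCofiltered F.Elements)
    (hcont : ScContinuous F) :
    (∀ lam : ℝ, 0 < lam → Subsingleton (CoStalk F lam)) ∧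
    ∀ V : ScObj, V.s ⊆ Set.Ioi 0 →
      Function.Bijective
        (fun z : Σ lam : V.s, CoStalk F (lam : ℝ) => (z.2.1 ⟨V, z.1.2⟩ : F.obj V)) := by
  haveI := hflat
  -- A nonempty set of sections forces a nonempty interval.
  have NE : ∀ Ω : ScObj, F.obj Ω → Ω.s.Nonempty := by
    intro Ω y
    by_contra hne
    rw [Set.not_nonempty_iff_eq_empty] at hne
    obtain ⟨i, -⟩ := hcont Ω PEmpty PEmpty.elim (fun i => i.elim) (fun i => i.elim)
      (by rw [hne]; exact Set.iUnion_of_empty _) y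
    exact i.elim
  -- Two parallel morphisms equalized on an element coincide.
  have EQ : ∀ {Ω Ω' : ScObj} (f g : Ω ⟶ Ω') (u : F.obj Ω),
      F.map f u = F.map g u → f = g := by
    intro Ω Ω' f g u huv
    let X : F.Elements := ⟨Ω, u⟩
    let Y : F.Elements := ⟨Ω', F.map f u⟩
    obtain ⟨K, h, hh⟩ := @IsCofilteredOrEmpty.cone_maps F.Elements _ _ X Y
      (CategoryOfElements.homMk X Y f rfl) (CategoryOfElements.homMk X Y g huv.symm)
    obtain ⟨h, hu⟩ := h
    obtain ⟨t, ht⟩ := NE K.1 K.2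
    have hc : h ≫ f = h ≫ g := congrArg Subtype.val hh
    obtain ⟨n, hn⟩ := f.2
    obtain ⟨m, hm⟩ := g.2
    have hz : ((f.1 (h.1 ⟨t, ht⟩) : ℝ)) = ((g.1 (h.1 ⟨t, ht⟩) : ℝ)) :=
      congrArg (fun φ : K.1 ⟶ Ω' => ((φ.1 ⟨t, ht⟩ : Ω'.s) : ℝ)) hc
    rw [hn, hm] at hz
    have hz0 : (0 : ℝ) < ((h.1 ⟨t, ht⟩ : Ω.s) : ℝ) := scMemPos Ω (h.1 ⟨t, ht⟩).2
    have hnm : (n : ℝ) = (m : ℝ) := mul_right_cancel₀ (ne_of_gt hz0) hz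
    exact scHomExt f g fun x => by rw [hn, hm, hnm]
  -- Common ancestors for pairs of elements.
  have ANC : ∀ (Ω₁ Ω₂ : ScObj) (x₁ : F.obj Ω₁) (x₂ : F.obj Ω₂),
      ∃ (K : ScObj) (u : F.obj K) (A : K ⟶ Ω₁) (B : K ⟶ Ω₂),
        F.map A u = x₁ ∧ F.map B u = x₂ := by
    intro Ω₁ Ω₂ x₁ x₂
    let X₁ : F.Elements := ⟨Ω₁, x₁⟩
    let X₂ : F.Elements := ⟨Ω₂, x₂⟩
    obtain ⟨W, A, B, -⟩ := @IsCofilteredOrEmpty.cone_objs F.Elements _ _ X₁ X₂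
    obtain ⟨A, hA⟩ := A
    obtain ⟨B, hB⟩ := B
    exact ⟨W.1, W.2, A, B, hA, hB⟩
  -- Gluing: two lifts of the same element along inclusions agree after any common inclusion.
  have GLUE : ∀ (V W J J' : ScObj) (y : F.obj V)
      (hJ : J.s ⊆ V.s) (hJ' : J'.s ⊆ V.s) (hJW : J.s ⊆ W.s) (hJ'W : J'.s ⊆ W.s)
      (x : F.obj J) (x' : F.obj J'),
      F.map (inclHom J V hJ) x = y → F.map (inclHom J' V hJ') x' = y →
      F.map (inclHom J W hJW) x = F.map (inclHom J' W hJ'W) x' := by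
    intro V W J J' y hJ hJ' hJW hJ'W x x' hx hx'
    obtain ⟨K, u, A, B, hA, hB⟩ := ANC J J' x x'
    have h1 : F.map (A ≫ inclHom J V hJ) u = F.map (B ≫ inclHom J' V hJ') u := by
      rw [FunctorToTypes.map_comp_apply, FunctorToTypes.map_comp_apply, hA, hB, hx, hx']
    have h2 := EQ _ _ u h1
    have h3 : A ≫ inclHom J W hJW = B ≫ inclHom J' W hJ'W := by
      apply scHomExt
      intro tt
      have h4 : ((A.1 tt : ℝ)) = ((B.1 tt : ℝ)) :=
        congrArg (fun φ : K ⟶ V => ((φ.1 tt : V.s) : ℝ)) h2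
      exact h4
    calc F.map (inclHom J W hJW) x = F.map (A ≫ inclHom J W hJW) u := by
          rw [FunctorToTypes.map_comp_apply, hA]
      _ = F.map (B ≫ inclHom J' W hJ'W) u := by rw [h3]
      _ = F.map (inclHom J' W hJ'W) x' := by rw [FunctorToTypes.map_comp_apply, hB]
  -- Part (i): co-stalks are subsingletons.
  have part1 : ∀ lam : ℝ, 0 < lam → Subsingleton (CoStalk F lam) := by
    intro lam hlam
    constructor
    intro s t
    apply Subtype.ext
    funext J
    obtain ⟨K, u, A, B, hA, hB⟩ := ANC J.1 J.1 (s.1 J) (t.1 J)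
    obtain ⟨n, hn⟩ := A.2
    obtain ⟨m, hm⟩ := B.2
    by_cases hnm : (n : ℝ) = (m : ℝ)
    · have hab : A = B := scHomExt A B fun x => by rw [hn, hm, hnm]
      rw [← hA, ← hB, hab]
    · exfalso
      have hn0 : (0 : ℝ) < (n : ℝ) := by exact_mod_cast n.pos
      have hm0 : (0 : ℝ) < (m : ℝ) := by exact_mod_cast m.pos
      set r : ℝ := max ((n : ℝ) / m) ((m : ℝ) / n) with hrdef
      have hr1 : 1 < r := by
        rcases lt_or_gt_of_ne hnm with h | h
        · exact lt_max_of_lt_right ((one_lt_div hn0).mpr h)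
        · exact lt_max_of_lt_left ((one_lt_div hm0).mpr h)
      set ε : ℝ := lam * (r - 1) / (2 * (r + 1)) with hεdef
      have hε0 : 0 < ε := div_pos (mul_pos hlam (by linarith)) (by linarith)
      have hε1 : ε * (2 * (r + 1)) = lam * (r - 1) := by
        rw [hεdef]; field_simp
      have hkey : lam + ε < r * (lam - ε) := by
        nlinarith [mul_pos hε0 (show (0:ℝ) < r by linarith)]
      obtain ⟨α, β, hJs⟩ := J.1.isInterval
      have hlJ : lam ∈ Set.Ioo α β := hJs ▸ J.2
      have h0α : 0 ≤ α := scLowerBound J.1 hJs ⟨lam, J.2⟩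
      set c' := max α (lam - ε) with hc'
      set d' := min β (lam + ε) with hd'
      have h0c' : 0 ≤ c' := le_trans h0α (le_max_left _ _)
      set J' : ScObj := mkObj c' d' h0c' with hJ'
      have hlamJ' : lam ∈ J'.s :=
        ⟨max_lt hlJ.1 (by linarith), lt_min hlJ.2 (by linarith)⟩
      have hJ'J : J'.s ⊆ J.1.s := by
        rw [hJs]
        rintro z ⟨hz1, hz2⟩
        exact ⟨lt_of_le_of_lt (le_max_left _ _) hz1, lt_of_lt_of_le hz2 (min_le_left _ _)⟩
      have hsJ : F.map (inclHom J' J.1 hJ'J) (s.1 ⟨J', hlamJ'⟩) = s.1 J :=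
        s.2 ⟨J', hlamJ'⟩ J (inclHom J' J.1 hJ'J) (fun x => rfl)
      have htJ : F.map (inclHom J' J.1 hJ'J) (t.1 ⟨J', hlamJ'⟩) = t.1 J :=
        t.2 ⟨J', hlamJ'⟩ J (inclHom J' J.1 hJ'J) (fun x => rfl)
      obtain ⟨K₁, u₁, p₁, q₁, hp₁, hq₁⟩ := ANC K J' u (s.1 ⟨J', hlamJ'⟩)
      obtain ⟨K₂, u₂, p₂, q₂, hp₂, hq₂⟩ := ANC K₁ J' u₁ (t.1 ⟨J', hlamJ'⟩)
      have R1 : (p₂ ≫ p₁) ≫ A = (p₂ ≫ q₁) ≫ inclHom J' J.1 hJ'J := by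
        apply EQ _ _ u₂
        simp only [FunctorToTypes.map_comp_apply, hp₂, hp₁, hq₁, hA, hsJ]
      have R2 : (p₂ ≫ p₁) ≫ B = q₂ ≫ inclHom J' J.1 hJ'J := by
        apply EQ _ _ u₂
        simp only [FunctorToTypes.map_comp_apply, hp₂, hp₁, hq₂, hB, htJ]
      obtain ⟨t₀, ht₀⟩ := NE K₂ u₂
      set w : K.s := (p₂ ≫ p₁).1 ⟨t₀, ht₀⟩ with hw
      have e1 : ((A.1 w : ℝ)) = ((q₁.1 (p₂.1 ⟨t₀, ht₀⟩) : ℝ)) :=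
        congrArg (fun φ : K₂ ⟶ J.1 => ((φ.1 ⟨t₀, ht₀⟩ : J.1.s) : ℝ)) R1
      have e2 : ((B.1 w : ℝ)) = ((q₂.1 ⟨t₀, ht₀⟩ : ℝ)) :=
        congrArg (fun φ : K₂ ⟶ J.1 => ((φ.1 ⟨t₀, ht₀⟩ : J.1.s) : ℝ)) R2
      have hz1 : ((q₁.1 (p₂.1 ⟨t₀, ht₀⟩) : ℝ)) ∈ Set.Ioo c' d' :=
        (q₁.1 (p₂.1 ⟨t₀, ht₀⟩)).2
      have hz2 : ((q₂.1 ⟨t₀, ht₀⟩ : ℝ)) ∈ Set.Ioo c' d' := (q₂.1 ⟨t₀, ht₀⟩).2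
      rw [hn] at e1
      rw [hm] at e2
      have b1 : lam - ε < (n : ℝ) * (w : ℝ) := by
        have := hz1.1
        have h5 : lam - ε ≤ c' := le_max_right _ _
        rw [← e1] at *
        linarith
      have b2 : (n : ℝ) * (w : ℝ) < lam + ε := by
        have := hz1.2
        have h5 : d' ≤ lam + ε := min_le_right _ _
        rw [← e1] at *
        linarith
      have b3 : lam - ε < (m : ℝ) * (w : ℝ) := by
        have := hz2.1
        have h5 : lam - ε ≤ c' := le_max_right _ _
        rw [← e2] at *
        linarith
      have b4 : (m : ℝ) * (w : ℝ) < lam + ε := by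
        have := hz2.2
        have h5 : d' ≤ lam + ε := min_le_right _ _
        rw [← e2] at *
        linarith
      have hr0 : (0 : ℝ) < r := by linarith
      rcases max_cases ((n : ℝ) / m) ((m : ℝ) / n) with ⟨hre, -⟩ | ⟨hre, -⟩
      · have hlt : r * (lam - ε) < r * ((m : ℝ) * w) := by
          exact mul_lt_mul_of_pos_left b3 hr0
        have heq2 : r * ((m : ℝ) * w) = (n : ℝ) * w := by
          rw [hrdef, hre]; field_simp
        linarith
      · have hlt : r * (lam - ε) < r * ((n : ℝ) * w) := by
          exact mul_lt_mul_of_pos_left b1 hr0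
        have heq2 : r * ((n : ℝ) * w) = (m : ℝ) * w := by
          rw [hrdef, hre]; field_simp
        linarith
  refine ⟨part1, ?_⟩
  intro V hV
  constructor
  · -- Injectivity
    rintro ⟨⟨lam, hlamV⟩, s⟩ ⟨⟨mu, hmuV⟩, t⟩ h
    have h' : s.1 ⟨V, hlamV⟩ = t.1 ⟨V, hmuV⟩ := h
    have hlam0 : 0 < lam := hV hlamV
    have heq : lam = mu := by
      by_contra hne
      have habs : 0 < |lam - mu| := abs_pos.mpr (sub_ne_zero.mpr hne)
      set ε := |lam - mu| / 2 with hεdef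
      have hε : 0 < ε := by rw [hεdef]; linarith
      obtain ⟨a, b, hVs⟩ := V.isInterval
      have h0a : 0 ≤ a := scLowerBound V hVs ⟨lam, hlamV⟩
      have hlmem : lam ∈ Set.Ioo a b := hVs ▸ hlamV
      have hmmem : mu ∈ Set.Ioo a b := hVs ▸ hmuV
      set J : ScObj := mkObj (max a (lam - ε)) (min b (lam + ε))
        (le_trans h0a (le_max_left _ _)) with hJdef
      set J' : ScObj := mkObj (max a (mu - ε)) (min b (mu + ε))
        (le_trans h0a (le_max_left _ _)) with hJ'def
      have hlamJ : lam ∈ J.s :=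
        ⟨max_lt hlmem.1 (by linarith), lt_min hlmem.2 (by linarith)⟩
      have hmuJ' : mu ∈ J'.s :=
        ⟨max_lt hmmem.1 (by linarith), lt_min hmmem.2 (by linarith)⟩
      have hJV : J.s ⊆ V.s := by
        rw [hVs]
        rintro z ⟨hz1, hz2⟩
        exact ⟨lt_of_le_of_lt (le_max_left _ _) hz1, lt_of_lt_of_le hz2 (min_le_left _ _)⟩
      have hJ'V : J'.s ⊆ V.s := by
        rw [hVs]
        rintro z ⟨hz1, hz2⟩
        exact ⟨lt_of_le_of_lt (le_max_left _ _) hz1, lt_of_lt_of_le hz2 (min_le_left _ _)⟩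
      have hs : F.map (inclHom J V hJV) (s.1 ⟨J, hlamJ⟩) = s.1 ⟨V, hlamV⟩ :=
        s.2 ⟨J, hlamJ⟩ ⟨V, hlamV⟩ (inclHom J V hJV) (fun x => rfl)
      have ht : F.map (inclHom J' V hJ'V) (t.1 ⟨J', hmuJ'⟩) = t.1 ⟨V, hmuV⟩ :=
        t.2 ⟨J', hmuJ'⟩ ⟨V, hmuV⟩ (inclHom J' V hJ'V) (fun x => rfl)
      obtain ⟨K, u, A, B, hA, hB⟩ := ANC J J' (s.1 ⟨J, hlamJ⟩) (t.1 ⟨J', hmuJ'⟩)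
      have h1 : F.map (A ≫ inclHom J V hJV) u = F.map (B ≫ inclHom J' V hJ'V) u := by
        rw [FunctorToTypes.map_comp_apply, FunctorToTypes.map_comp_apply, hA, hB, hs, ht, h']
      have h2 := EQ _ _ u h1
      obtain ⟨t₀, ht₀⟩ := NE K u
      have hv : ((A.1 ⟨t₀, ht₀⟩ : ℝ)) = ((B.1 ⟨t₀, ht₀⟩ : ℝ)) :=
        congrArg (fun φ : K ⟶ V => ((φ.1 ⟨t₀, ht₀⟩ : V.s) : ℝ)) h2
      have hAm : ((A.1 ⟨t₀, ht₀⟩ : ℝ)) ∈ Set.Ioo (max a (lam - ε)) (min b (lam + ε)) :=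
        (A.1 ⟨t₀, ht₀⟩).2
      have hBm : ((B.1 ⟨t₀, ht₀⟩ : ℝ)) ∈ Set.Ioo (max a (mu - ε)) (min b (mu + ε)) :=
        (B.1 ⟨t₀, ht₀⟩).2
      have c1 : lam - ε < ((A.1 ⟨t₀, ht₀⟩ : ℝ)) :=
        lt_of_le_of_lt (le_max_right _ _) hAm.1
      have c2 : ((A.1 ⟨t₀, ht₀⟩ : ℝ)) < lam + ε :=
        lt_of_lt_of_le hAm.2 (min_le_right _ _)
      have c3 : mu - ε < ((B.1 ⟨t₀, ht₀⟩ : ℝ)) :=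
        lt_of_le_of_lt (le_max_right _ _) hBm.1
      have c4 : ((B.1 ⟨t₀, ht₀⟩ : ℝ)) < mu + ε :=
        lt_of_lt_of_le hBm.2 (min_le_right _ _)
      have : |lam - mu| < 2 * ε := abs_sub_lt_iff.mpr ⟨by linarith, by linarith⟩
      rw [hεdef] at this
      linarith
    subst heq
    exact congrArg (fun w => (⟨⟨lam, hlamV⟩, w⟩ : Σ lam : V.s, CoStalk F (lam : ℝ)))
      (@Subsingleton.elim _ (part1 lam hlam0) s t)
  · -- Surjectivity
    intro y
    have hVne : V.s.Nonempty := NE V y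
    obtain ⟨a, b, hVs⟩ := V.isInterval
    have h0a : 0 ≤ a := scLowerBound V hVs hVne
    have hVeq : V = mkObj a b h0a := ScObj.ext' hVs
    have hab : a < b := by
      obtain ⟨t, ht⟩ := hVne
      rw [hVs] at ht
      exact lt_trans ht.1 ht.2
    -- Lifts of y along inclusions
    set Lift : ScObj → Prop :=
      fun J => ∃ (h : J.s ⊆ V.s) (x : F.obj J), F.map (inclHom J V h) x = y with hLiftdef
    have hLiftV : Lift V := by
      refine ⟨Set.Subset.rfl, y, ?_⟩
      have : inclHom V V Set.Subset.rfl = 𝟙 V := scHomExt _ _ (fun z => rfl)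
      rw [this, FunctorToTypes.map_id_apply]
    have hLiftmk : Lift (mkObj a b h0a) := hVeq ▸ hLiftV
    -- Shrinking a lift to a small compactly-contained subinterval
    have SHRINK : ∀ (c d : ℝ) (h0 : 0 ≤ c), c < d → Lift (mkObj c d h0) →
        ∀ ε : ℝ, 0 < ε → ∃ (c' d' : ℝ) (h0' : 0 ≤ c'),
          c' < d' ∧ d' - c' ≤ ε ∧ Set.Icc c' d' ⊆ Set.Ioo c d ∧ Lift (mkObj c' d' h0') := by
      intro c d h0 hcd hL ε hε
      set J : ScObj := mkObj c d h0 with hJdef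
      obtain ⟨hsub, x, hx⟩ := hL
      set rr : J.s → ℝ := fun t => min ε (min ((t : ℝ) - c) (d - (t : ℝ))) / 2 with hrrdef
      have hrle : ∀ t : J.s, rr t ≤ ((t : ℝ) - c) / 2 ∧ rr t ≤ (d - (t : ℝ)) / 2 ∧
          rr t ≤ ε / 2 := by
        intro t
        have m1 : min ε (min ((t : ℝ) - c) (d - (t : ℝ))) ≤ ε := min_le_left _ _
        have m2 : min ε (min ((t : ℝ) - c) (d - (t : ℝ))) ≤ min ((t : ℝ) - c) (d - (t : ℝ)) :=
          min_le_right _ _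
        have m3 : min ((t : ℝ) - c) (d - (t : ℝ)) ≤ (t : ℝ) - c := min_le_left _ _
        have m4 : min ((t : ℝ) - c) (d - (t : ℝ)) ≤ d - (t : ℝ) := min_le_right _ _
        refine ⟨by rw [hrrdef]; dsimp only; linarith, by rw [hrrdef]; dsimp only; linarith,
          by rw [hrrdef]; dsimp only; linarith⟩
      have hrpos : ∀ t : J.s, 0 < rr t := by
        intro t
        have h1 : c < (t : ℝ) := t.2.1
        have h2 : (t : ℝ) < d := t.2.2
        have : 0 < min ε (min ((t : ℝ) - c) (d - (t : ℝ))) :=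
          lt_min hε (lt_min (by linarith) (by linarith))
        rw [hrrdef]; dsimp only; linarith
      have h0U : ∀ t : J.s, 0 ≤ (t : ℝ) - rr t := by
        intro t
        have h1 : c < (t : ℝ) := t.2.1
        have := (hrle t).1
        linarith
      set U : J.s → ScObj := fun t => mkObj ((t : ℝ) - rr t) ((t : ℝ) + rr t) (h0U t)
        with hUdef
      have hUJ : ∀ t : J.s, (U t).s ⊆ J.s := by
        intro t z hz
        have h1 : c < (t : ℝ) := t.2.1
        have h2 : (t : ℝ) < d := t.2.2
        obtain ⟨hz1, hz2⟩ := hz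
        have r1 := (hrle t).1
        have r2 := (hrle t).2.1
        exact ⟨by linarith, by linarith⟩
      have hUnion : (⋃ t, (U t).s) = J.s := by
        apply Set.Subset.antisymm
        · exact Set.iUnion_subset hUJ
        · intro z hz
          refine Set.mem_iUnion.mpr ⟨⟨z, hz⟩, ?_⟩
          have := hrpos ⟨z, hz⟩
          exact ⟨by linarith, by linarith⟩
      obtain ⟨i, x', hx'⟩ := hcont J J.s U (fun t => inclHom (U t) J (hUJ t))
        (fun t z => rfl) hUnion x
      refine ⟨(i : ℝ) - rr i, (i : ℝ) + rr i, h0U i, by linarith [hrpos i], ?_, ?_, ?_⟩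
      · have := (hrle i).2.2; linarith
      · rintro z ⟨hz1, hz2⟩
        have h1 : c < (i : ℝ) := i.2.1
        have h2 : (i : ℝ) < d := i.2.2
        have r1 := (hrle i).1
        have r2 := (hrle i).2.1
        have rp := hrpos i
        exact ⟨by linarith, by linarith⟩
      · refine ⟨fun z hz => hsub (hUJ i hz), x', ?_⟩
        have hcomp : inclHom (U i) V (fun z hz => hsub (hUJ i hz)) =
            inclHom (U i) J (hUJ i) ≫ inclHom J V hsub := scHomExt _ _ (fun z => rfl)
        rw [hcomp, FunctorToTypes.map_comp_apply, hx']
        exact hx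
    -- Build the nested sequence of intervals
    set T : Type := {p : ℝ × ℝ // ∃ h0 : 0 ≤ p.1, p.1 < p.2 ∧ Lift (mkObj p.1 p.2 h0)}
      with hTdef
    have hstep : ∀ (n : ℕ) (p : T), ∃ q : T,
        Set.Icc q.1.1 q.1.2 ⊆ Set.Ioo p.1.1 p.1.2 ∧ q.1.2 - q.1.1 ≤ (1/2 : ℝ)^n := by
      rintro n ⟨⟨pc, pd⟩, h0, hlt, hL⟩
      obtain ⟨c', d', h0', hcd', hlen', hsub', hL'⟩ :=
        SHRINK pc pd h0 hlt hL ((1/2 : ℝ)^n) (by positivity)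
      exact ⟨⟨(c', d'), h0', hcd', hL'⟩, hsub', hlen'⟩
    choose stepf hstep1 hstep2 using hstep
    set seq : ℕ → T := fun n => Nat.rec ⟨(a, b), h0a, hab, hLiftmk⟩ (fun n p => stepf n p) n
      with hseqdef
    set cc : ℕ → ℝ := fun n => (seq n).1.1 with hccdef
    set dd : ℕ → ℝ := fun n => (seq n).1.2 with hdddef
    have hnest : ∀ n, Set.Icc (cc (n+1)) (dd (n+1)) ⊆ Set.Ioo (cc n) (dd n) :=
      fun n => hstep1 n (seq n)
    have hlen : ∀ n, dd (n+1) - cc (n+1) ≤ (1/2 : ℝ)^n := fun n => hstep2 n (seq n)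
    have hprop : ∀ n, ∃ h0 : 0 ≤ cc n, cc n < dd n ∧ Lift (mkObj (cc n) (dd n) h0) :=
      fun n => (seq n).2
    choose h0cc hprop' using hprop
    have hccdd : ∀ n, cc n < dd n := fun n => (hprop' n).1
    have hcsucc : ∀ n, cc n < cc (n+1) :=
      fun n => (hnest n ⟨le_refl _, le_of_lt (hccdd (n+1))⟩).1
    have hdsucc : ∀ n, dd (n+1) < dd n :=
      fun n => (hnest n ⟨le_of_lt (hccdd (n+1)), le_refl _⟩).2
    have hcmono : Monotone cc := monotone_nat_of_le_succ (fun n => le_of_lt (hcsucc n))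
    have hdanti : Antitone dd := antitone_nat_of_succ_le (fun n => le_of_lt (hdsucc n))
    have hcd2 : ∀ m n, cc m < dd n := fun m n =>
      lt_of_le_of_lt (hcmono (le_max_left m n))
        (lt_of_lt_of_le (hccdd _) (hdanti (le_max_right m n)))
    have hbdd : BddAbove (Set.range cc) := by
      refine ⟨dd 0, ?_⟩
      rintro _ ⟨n, rfl⟩
      exact le_of_lt (hcd2 n 0)
    set lam : ℝ := ⨆ n, cc n with hlamdef
    have hgec : ∀ n, cc n ≤ lam := fun n => le_ciSup hbdd n
    have hled : ∀ n, lam ≤ dd n := fun n => ciSup_le (fun m => le_of_lt (hcd2 m n))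
    have hlamIoo : ∀ n, lam ∈ Set.Ioo (cc n) (dd n) := fun n =>
      ⟨lt_of_lt_of_le (hcsucc n) (hgec (n+1)), lt_of_le_of_lt (hled (n+1)) (hdsucc n)⟩
    have hlamV : lam ∈ V.s := by rw [hVs]; exact hlamIoo 0
    -- For each open interval around lam, find a small member inside it
    have hfind : ∀ W : {Jw : ScObj // lam ∈ Jw.s}, ∃ n, Set.Ioo (cc n) (dd n) ⊆ W.1.s := by
      intro W
      obtain ⟨aw, bw, hws⟩ := W.1.isInterval
      have hlw : lam ∈ Set.Ioo aw bw := hws ▸ W.2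
      have hδ : 0 < min (lam - aw) (bw - lam) :=
        lt_min (by linarith [hlw.1]) (by linarith [hlw.2])
      obtain ⟨n, hn⟩ := exists_pow_lt_of_lt_one hδ (by norm_num : (1/2 : ℝ) < 1)
      refine ⟨n+1, ?_⟩
      rw [hws]
      rintro z ⟨hz1, hz2⟩
      have h1 := (hlamIoo (n+1)).1
      have h2 := (hlamIoo (n+1)).2
      have h3 := hlen n
      have m1 : min (lam - aw) (bw - lam) ≤ lam - aw := min_le_left _ _
      have m2 : min (lam - aw) (bw - lam) ≤ bw - lam := min_le_right _ _
      exact ⟨by linarith, by linarith⟩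
    have hLift2 : ∀ n, ∃ (h : (mkObj (cc n) (dd n) (h0cc n)).s ⊆ V.s)
        (x : F.obj (mkObj (cc n) (dd n) (h0cc n))),
        F.map (inclHom (mkObj (cc n) (dd n) (h0cc n)) V h) x = y :=
      fun n => (hprop' n).2
    choose hsubn xs hxs using hLift2
    choose N hN using hfind
    refine ⟨⟨⟨lam, hlamV⟩,
      ⟨fun W => F.map (inclHom (mkObj (cc (N W)) (dd (N W)) (h0cc (N W))) W.1 (hN W))
        (xs (N W)), ?_⟩⟩, ?_⟩
    · intro W W' f hf
      have hWW' : W.1.s ⊆ W'.1.s := by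
        intro z hz
        have hmem := (f.1 ⟨z, hz⟩).2
        rwa [hf ⟨z, hz⟩] at hmem
      have hcomp : inclHom (mkObj (cc (N W)) (dd (N W)) (h0cc (N W))) W.1 (hN W) ≫ f =
          inclHom (mkObj (cc (N W)) (dd (N W)) (h0cc (N W))) W'.1
            (fun z hz => hWW' (hN W hz)) :=
        scHomExt _ _ (fun z => hf ⟨z.1, hN W z.2⟩)
      show F.map f (F.map (inclHom _ W.1 (hN W)) (xs (N W))) = _
      rw [← FunctorToTypes.map_comp_apply, hcomp]
      exact GLUE V W'.1 (mkObj (cc (N W)) (dd (N W)) (h0cc (N W)))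
        (mkObj (cc (N W')) (dd (N W')) (h0cc (N W'))) y (hsubn (N W)) (hsubn (N W'))
        (fun z hz => hWW' (hN W hz)) (hN W') (xs (N W)) (xs (N W'))
        (hxs (N W)) (hxs (N W'))
    · exact hxs (N ⟨V, hlamV⟩)
end
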